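/- arXiv:1906.12011 — 8 statements merged into one kernel-verified Lean document; each statement's English description precedes it below -/
import Mathlib

section
/- Let A be a supercommutative superalgebra, n ≥ 2, m ≥ 1. Fix indices a ≠ b in {1,...,n} and suppose T^{pq} ∈ A₀ (p,q = 1..n) are antisymmetric elements satisfying the classical Plücker relations T^{pq}T^{cd} = T^{pc}T^{qd} + T^{pd}T^{cq} for all indices, with T^{ab} invertible. Let θ^{aμ}, θ^{bμ} ∈ A₁ (μ = 1..m) be arbitrary odd elements, and define θ^{cμ} := (T^{ab})⁻¹ (T^{ac} θ^{bμ} + T^{cb} θ^{aμ}) for all c, and S^{λμ} := -(T^{ab})⁻¹ (θ^{aλ} θ^{bμ} + θ^{aμ} θ^{bλ}). Then the full set of super Plücker relations holds: (i) T^{pq} θ^{cμ} = T^{pc} θ^{qμ} + T^{cq} θ^{pμ}; (ii) T^{pq} S^{λμ} = -θ^{pλ} θ^{qμ} - θ^{pμ} θ^{qλ}; (iii) θ^{aν} S^{λμ} = -θ^{aλ} S^{μν} - θ^{aμ} S^{λν}; (iv) S^{κν} S^{λμ} = -S^{κλ} S^{μν} - S^{κμ} S^{λν}, for all values of the indices.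 -/
private lemma sp_swapL {A : Type} [Ring A] {x y : A} (h : x * y = -(y * x)) (t : A) :
    x * (y * t) = -(y * (x * t)) := by
  rw [← mul_assoc, h, neg_mul, mul_assoc]

private lemma sp_key {A : Type} [Ring A] (c x d y : A) (hd : ∀ z, d * z = z * d) :
    (c * x) * (d * y) = c * d * (x * y) := by
  rw [mul_assoc c x, ← mul_assoc x d, ← hd, mul_assoc d x, ← mul_assoc]

private lemma sp_quad {A : Type} [Ring A] (A1 B1 A2 B2 al am bl bm : A)
    (hA2 : ∀ z, A2 * z = z * A2) (hB2 : ∀ z, B2 * z = z * B2)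
    (hbb : bl * bm = -(bm * bl)) (haa : al * am = -(am * al))
    (hba1 : bl * am = -(am * bl)) (hba2 : bm * al = -(al * bm)) :
    (A1 * bl + B1 * al) * (A2 * bm + B2 * am) + (A1 * bm + B1 * am) * (A2 * bl + B2 * al)
      = (B1 * A2 - A1 * B2) * (al * bm + am * bl) := by
  rw [add_mul, mul_add, mul_add, add_mul, mul_add, mul_add,
    sp_key A1 bl A2 bm hA2, sp_key A1 bl B2 am hB2, sp_key B1 al A2 bm hA2,
    sp_key B1 al B2 am hB2, sp_key A1 bm A2 bl hA2, sp_key A1 bm B2 al hB2,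
    sp_key B1 am A2 bl hA2, sp_key B1 am B2 al hB2, hbb, haa, hba1, hba2]
  noncomm_ring

theorem reduced_super_pluecker_generate_full
    {A : Type} [Ring A]
    (IsEven IsOdd : A → Prop)
    (heven_central : ∀ x y : A, IsEven x → x * y = y * x)
    (hodd_anticomm : ∀ x y : A, IsOdd x → IsOdd y → x * y = -(y * x))
    (hodd_sq : ∀ x : A, IsOdd x → x * x = 0)
    {n m : ℕ} (hn : 2 ≤ n) (hm : 1 ≤ m)
    (a b : Fin n) (hab : a ≠ b)
    (T : Fin n → Fin n → A)
    (hT_even : ∀ p q, IsEven (T p q))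
    (hT_anti : ∀ p q, T p q = - T q p)
    (hPl : ∀ p q c d, T p q * T c d = T p c * T q d + T p d * T c q)
    (Ti : A) (hTi1 : T a b * Ti = 1) (hTi2 : Ti * T a b = 1)
    (θ : Fin n → Fin m → A)
    (hθa_odd : ∀ μ, IsOdd (θ a μ)) (hθb_odd : ∀ μ, IsOdd (θ b μ))
    (hθdef : ∀ c μ, θ c μ = Ti * (T a c * θ b μ + T c b * θ a μ))
    (S : Fin m → Fin m → A)
    (hSdef : ∀ lam μ, S lam μ = - (Ti * (θ a lam * θ b μ + θ a μ * θ b lam))) :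
    (∀ p q c μ, T p q * θ c μ = T p c * θ q μ + T c q * θ p μ) ∧
    (∀ p q lam μ, T p q * S lam μ = - (θ p lam * θ q μ) - θ p μ * θ q lam) ∧
    (∀ c lam μ nu, θ c nu * S lam μ = - (θ c lam * S μ nu) - θ c μ * S lam nu) ∧
    (∀ kap nu lam μ, S kap nu * S lam μ = - (S kap lam * S μ nu) - S kap μ * S lam nu) := by
  have hTc : ∀ p q (x : A), T p q * x = x * T p q := fun p q x => heven_central _ x (hT_even p q)
  have hcancel : ∀ {x y : A}, T a b * x = T a b * y → x = y := by
    intro x y h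
    have h2 := congrArg (fun z => Ti * z) h
    simpa only [← mul_assoc, hTi2, one_mul] using h2
  have htθ : ∀ c μ, T a b * θ c μ = T a c * θ b μ + T c b * θ a μ := by
    intro c μ; rw [hθdef c μ, ← mul_assoc, hTi1, one_mul]
  have htS : ∀ l μ, T a b * S l μ = -(θ a l * θ b μ + θ a μ * θ b l) := by
    intro l μ; rw [hSdef l μ, mul_neg, ← mul_assoc, hTi1, one_mul]
  have swapT : ∀ p q (x y : A), x * (T p q * y) = T p q * (x * y) := by
    intro p q x y; rw [← mul_assoc, ← hTc p q x, mul_assoc]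
  have t2 : ∀ x y : A, T a b * (T a b * (x * y)) = (T a b * x) * (T a b * y) := by
    intro x y
    rw [sp_key (T a b) x (T a b) y (hTc a b), ← mul_assoc]
  -- Part 1
  have part1 : ∀ p q c μ, T p q * θ c μ = T p c * θ q μ + T c q * θ p μ := by
    intro p q c μ
    have hc1 : T p q * T a c = T p c * T a q + T c q * T a p := by
      rw [hTc p q (T a c), hPl a c p q, hTc a p (T c q), hTc a q (T p c)]
      exact add_comm _ _
    have hc2 : T p q * T c b = T p c * T q b + T c q * T p b := by
      rw [hPl p q c b, hTc p b (T c q)]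
    apply hcancel
    have e1 : T a b * (T p q * θ c μ) = T p q * T a c * θ b μ + T p q * T c b * θ a μ := by
      rw [← mul_assoc, hTc a b (T p q), mul_assoc, htθ c μ, mul_add, ← mul_assoc, ← mul_assoc]
    have e2 : T a b * (T p c * θ q μ + T c q * θ p μ)
        = (T p c * T a q + T c q * T a p) * θ b μ + (T p c * T q b + T c q * T p b) * θ a μ := by
      rw [mul_add, ← mul_assoc, hTc a b (T p c), mul_assoc, htθ q μ,
          ← mul_assoc (T a b) (T c q), hTc a b (T c q), mul_assoc, htθ p μ,
          mul_add, mul_add, ← mul_assoc, ← mul_assoc, ← mul_assoc, ← mul_assoc,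
          add_mul, add_mul]
      noncomm_ring
    rw [e1, e2, hc1, hc2]
  -- Part 2
  have hPP : ∀ p q l μ, (T a p * θ b l + T p b * θ a l) * (T a q * θ b μ + T q b * θ a μ)
      + (T a p * θ b μ + T p b * θ a μ) * (T a q * θ b l + T q b * θ a l)
      = (T a b * T p q) * (θ a l * θ b μ + θ a μ * θ b l) := by
    intro p q l μ
    have hco : T p b * T a q - T a p * T q b = T a b * T p q := by
      rw [hPl a b p q, hT_anti b q, mul_neg, hTc a q (T p b)]
      noncomm_ring
    rw [sp_quad (T a p) (T p b) (T a q) (T q b) (θ a l) (θ a μ) (θ b l) (θ b μ)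
        (hTc a q) (hTc q b)
        (hodd_anticomm _ _ (hθb_odd l) (hθb_odd μ)) (hodd_anticomm _ _ (hθa_odd l) (hθa_odd μ))
        (hodd_anticomm _ _ (hθb_odd l) (hθa_odd μ)) (hodd_anticomm _ _ (hθb_odd μ) (hθa_odd l)),
        hco]
  have part2 : ∀ p q l μ, T p q * S l μ = -(θ p l * θ q μ) - θ p μ * θ q l := by
    intro p q l μ
    apply hcancel; apply hcancel
    have e1 : T a b * (T a b * (T p q * S l μ))
        = -((T a b * T p q) * (θ a l * θ b μ + θ a μ * θ b l)) := by
      rw [← swapT a b (T p q) (S l μ), ← swapT a b (T p q) (T a b * S l μ), htS l μ,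
          mul_neg, mul_neg, ← mul_assoc, ← hTc a b (T p q)]
    have e2 : T a b * (T a b * (-(θ p l * θ q μ) - θ p μ * θ q l))
        = -((T a p * θ b l + T p b * θ a l) * (T a q * θ b μ + T q b * θ a μ))
          - (T a p * θ b μ + T p b * θ a μ) * (T a q * θ b l + T q b * θ a l) := by
      rw [mul_sub, mul_sub, mul_neg, mul_neg, t2, t2, htθ, htθ, htθ, htθ]
    rw [e1, e2, ← hPP p q l μ]
    noncomm_ring
  -- Part 3
  have h3a : ∀ nu l μ, θ a nu * S l μ = -(θ a l * S μ nu) - θ a μ * S l nu := by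
    intro nu l μ
    apply hcancel
    conv_lhs => rw [← swapT a b (θ a nu) (S l μ), htS l μ]
    conv_rhs => rw [mul_sub, mul_neg, ← swapT a b (θ a l) (S μ nu),
      ← swapT a b (θ a μ) (S l nu), htS μ nu, htS l nu]
    simp only [mul_neg, neg_neg, mul_add]
    rw [sp_swapL (hodd_anticomm _ _ (hθa_odd nu) (hθa_odd l)) (θ b μ),
        sp_swapL (hodd_anticomm _ _ (hθa_odd nu) (hθa_odd μ)) (θ b l),
        sp_swapL (hodd_anticomm _ _ (hθa_odd l) (hθa_odd μ)) (θ b nu)]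
    noncomm_ring
  have mba : ∀ (x y : Fin m) (t : A), θ b x * (θ a y * t) = -(θ a y * (θ b x * t)) :=
    fun x y t => sp_swapL (hodd_anticomm _ _ (hθb_odd x) (hθa_odd y)) t
  have h3b : ∀ nu l μ, θ b nu * S l μ = -(θ b l * S μ nu) - θ b μ * S l nu := by
    intro nu l μ
    apply hcancel
    conv_lhs => rw [← swapT a b (θ b nu) (S l μ), htS l μ]
    conv_rhs => rw [mul_sub, mul_neg, ← swapT a b (θ b l) (S μ nu),
      ← swapT a b (θ b μ) (S l nu), htS μ nu, htS l nu]
    simp only [mul_neg, neg_neg, mul_add, mba]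
    rw [hodd_anticomm _ _ (hθb_odd nu) (hθb_odd μ),
        hodd_anticomm _ _ (hθb_odd nu) (hθb_odd l),
        hodd_anticomm _ _ (hθb_odd μ) (hθb_odd l)]
    noncomm_ring
  have part3 : ∀ c lam μ nu, θ c nu * S lam μ = -(θ c lam * S μ nu) - θ c μ * S lam nu := by
    intro c l μ nu
    rw [hθdef c nu, hθdef c l, hθdef c μ]
    simp only [mul_assoc, add_mul]
    rw [h3a nu l μ, h3b nu l μ]
    noncomm_ring
  -- Part 4
  have hPid : ∀ k nu l μ, (θ a k * θ b nu + θ a nu * θ b k) * (θ a l * θ b μ + θ a μ * θ b l)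
      = -((θ a k * θ b l + θ a l * θ b k) * (θ a μ * θ b nu + θ a nu * θ b μ))
        - (θ a k * θ b μ + θ a μ * θ b k) * (θ a l * θ b nu + θ a nu * θ b l) := by
    intro k nu l μ
    simp only [add_mul, mul_add, mul_assoc]
    simp only [mba, mul_neg, neg_neg]
    simp only [sp_swapL (hodd_anticomm _ _ (hθa_odd nu) (hθa_odd l)),
      sp_swapL (hodd_anticomm _ _ (hθa_odd nu) (hθa_odd μ)),
      sp_swapL (hodd_anticomm _ _ (hθa_odd μ) (hθa_odd l)),
      hodd_anticomm _ _ (hθb_odd nu) (hθb_odd μ),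
      hodd_anticomm _ _ (hθb_odd nu) (hθb_odd l),
      hodd_anticomm _ _ (hθb_odd μ) (hθb_odd l), mul_neg, neg_neg]
    noncomm_ring
  have part4 : ∀ k nu l μ, S k nu * S l μ = -(S k l * S μ nu) - S k μ * S l nu := by
    intro k nu l μ
    apply hcancel; apply hcancel
    have hSS : ∀ x y u v, T a b * (T a b * (S x y * S u v))
        = (θ a x * θ b y + θ a y * θ b x) * (θ a u * θ b v + θ a v * θ b u) := by
      intro x y u v
      rw [t2, htS, htS, neg_mul_neg]
    simp only [mul_sub, mul_neg]
    rw [hSS, hSS, hSS]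
    exact hPid k nu l μ
  exact ⟨part1, part2, part3, part4⟩
end

section
/- Let A be a supercommutative superalgebra and let U be a 2 × (n+m) matrix with both rows even (entries U_{ia} even for columns a = 1..n and odd for columns indexed μ = 1..m). Define T^{ab} := U_{1a}U_{2b} - U_{1b}U_{2a} (even), θ^{aμ} := U_{1a}U_{2μ} - U_{1μ}U_{2a} (odd). Then for all a,b,c ∈ {1,...,n} and μ ∈ {1,...,m}: T^{ab} θ^{cμ} = T^{ac} θ^{bμ} + T^{cb} θ^{aμ}. -/
/-- Helper: multiplying a central element into an expression `x*p - q*y`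
with `x, y` central pulls the central factors together. -/
lemma center_mul_split {A : Type} [Ring A] (E x y : Subring.center A) (p q : A) :
    (E : A) * ((x : A) * p - q * (y : A)) =
      ((E * x : Subring.center A) : A) * p - ((E * y : Subring.center A) : A) * q := by
  have hy : q * (y : A) = (y : A) * q := Subring.mem_center_iff.mp y.2 q
  push_cast
  rw [mul_sub, hy, ← mul_assoc, ← mul_assoc]

/- STATEMENT 3: odd super Plücker relation T^{ab} θ^{cμ} = T^{ac} θ^{bμ} + T^{cb} θ^{aμ}
for the minors of a 2-row even matrix over a supercommutative superalgebra. -/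
theorem odd_super_pluecker_for_minors
    {A : Type} [Ring A]
    (IsEven IsOdd : A → Prop)
    (heven_central : ∀ x y : A, IsEven x → x * y = y * x)
    (hodd_anticomm : ∀ x y : A, IsOdd x → IsOdd y → x * y = -(y * x))
    (hodd_sq : ∀ x : A, IsOdd x → x * x = 0)
    {n m : ℕ}
    (Ue : Fin 2 → Fin n → A) (Uo : Fin 2 → Fin m → A)
    (hUe_even : ∀ i a, IsEven (Ue i a))
    (hUo_odd : ∀ i μ, IsOdd (Uo i μ))
    (T : Fin n → Fin n → A) (θ : Fin n → Fin m → A)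
    (hT : ∀ a b, T a b = Ue 0 a * Ue 1 b - Ue 0 b * Ue 1 a)
    (hθ : ∀ a μ, θ a μ = Ue 0 a * Uo 1 μ - Uo 0 μ * Ue 1 a) :
    ∀ (a b c : Fin n) (μ : Fin m),
      T a b * θ c μ = T a c * θ b μ + T c b * θ a μ := by
  intro a b c μ
  have hmem : ∀ i t, Ue i t ∈ Subring.center A := fun i t =>
    Subring.mem_center_iff.mpr fun g => (heven_central (Ue i t) g (hUe_even i t)).symm
  set xa : Subring.center A := ⟨Ue 0 a, hmem 0 a⟩ with hxa
  set xb : Subring.center A := ⟨Ue 0 b, hmem 0 b⟩ with hxb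
  set xc : Subring.center A := ⟨Ue 0 c, hmem 0 c⟩ with hxc
  set ya : Subring.center A := ⟨Ue 1 a, hmem 1 a⟩ with hya
  set yb : Subring.center A := ⟨Ue 1 b, hmem 1 b⟩ with hyb
  set yc : Subring.center A := ⟨Ue 1 c, hmem 1 c⟩ with hyc
  set p : A := Uo 1 μ
  set q : A := Uo 0 μ
  have hTab : T a b = ((xa * yb - xb * ya : Subring.center A) : A) := by
    rw [hT]; push_cast; rfl
  have hTac : T a c = ((xa * yc - xc * ya : Subring.center A) : A) := by
    rw [hT]; push_cast; rfl
  have hTcb : T c b = ((xc * yb - xb * yc : Subring.center A) : A) := by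
    rw [hT]; push_cast; rfl
  have hθc : θ c μ = (xc : A) * p - q * (yc : A) := by rw [hθ]
  have hθb : θ b μ = (xb : A) * p - q * (yb : A) := by rw [hθ]
  have hθa : θ a μ = (xa : A) * p - q * (ya : A) := by rw [hθ]
  rw [hTab, hTac, hTcb, hθa, hθb, hθc,
    center_mul_split, center_mul_split, center_mul_split]
  have h1 : (xa * yb - xb * ya) * xc
      = (xa * yc - xc * ya) * xb + (xc * yb - xb * yc) * xa := by ring
  have h2 : (xa * yb - xb * ya) * yc
      = (xa * yc - xc * ya) * yb + (xc * yb - xb * yc) * ya := by ring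
  rw [h1, h2]
  push_cast
  rw [add_mul, add_mul]
  abel
end

section
/- Let A be a supercommutative superalgebra and U a 2 × (n+m) matrix with even rows, even columns indexed 1..n and odd columns indexed 1..m. Then for all a,b ∈ {1,...,n} and λ,μ ∈ {1,...,m} the identity (U_{1a}U_{2b} - U_{1b}U_{2a})(U_{1λ}U_{2μ} + U_{1μ}U_{2λ}) = (U_{1a}U_{2λ} - U_{1λ}U_{2a})(U_{1b}U_{2μ} - U_{1μ}U_{2b}) + (U_{1a}U_{2μ} - U_{1μ}U_{2a})(U_{1b}U_{2λ} - U_{1λ}U_{2b}) holds in A, where U_{1a},U_{2a},U_{1b},U_{2b} are even and U_{1λ},U_{2λ},U_{1μ},U_{2μ} are odd elements of A. -/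
/- STATEMENT 4: even-even-odd-odd super Plücker relation, concrete polynomial
identity in a supercommutative superalgebra: with u1a,u2a,u1b,u2b even and
u1l,u2l,u1m,u2m odd,
(u1a u2b − u1b u2a)(u1l u2m + u1m u2l)
  = (u1a u2l − u1l u2a)(u1b u2m − u1m u2b) + (u1a u2m − u1m u2a)(u1b u2l − u1l u2b). -/
theorem mixed_super_pluecker_relation
    {A : Type} [Ring A]
    (IsEven IsOdd : A → Prop)
    (heven_central : ∀ x y : A, IsEven x → x * y = y * x)
    (hodd_anticomm : ∀ x y : A, IsOdd x → IsOdd y → x * y = -(y * x))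
    (hodd_sq : ∀ x : A, IsOdd x → x * x = 0)
    (u1a u2a u1b u2b u1l u2l u1m u2m : A)
    (h1a : IsEven u1a) (h2a : IsEven u2a) (h1b : IsEven u1b) (h2b : IsEven u2b)
    (h1l : IsOdd u1l) (h2l : IsOdd u2l) (h1m : IsOdd u1m) (h2m : IsOdd u2m) :
    (u1a * u2b - u1b * u2a) * (u1l * u2m + u1m * u2l)
      = (u1a * u2l - u1l * u2a) * (u1b * u2m - u1m * u2b)
        + (u1a * u2m - u1m * u2a) * (u1b * u2l - u1l * u2b) := by
  have sw : ∀ e x : A, IsEven e → x * e = e * x := fun e x he => (heven_central e x he).symm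
  have sw2 : ∀ e x : A, IsEven e → ∀ y, x * (e * y) = e * (x * y) := by
    intro e x he y
    rw [← mul_assoc, sw e x he, mul_assoc]
  simp only [mul_sub, sub_mul, mul_add, add_mul, mul_assoc,
    sw2 u1b u2l h1b, sw2 u1b u1l h1b, sw2 u2b u2l h2b, sw2 u2b u1l h2b,
    sw2 u1b u2m h1b, sw2 u1b u1m h1b, sw2 u2b u2m h2b, sw2 u2b u1m h2b,
    sw2 u2a u1b h2a, sw2 u2a u2b h2a,
    sw2 u2a u1l h2a, sw2 u2a u1m h2a, sw2 u2a u2l h2a, sw2 u2a u2m h2a,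
    sw u2a u1l h2a, sw u2a u1m h2a, sw u1b u2l h1b, sw u1b u2m h1b,
    sw u2b u2l h2b, sw u2b u2m h2b, sw u2b u1l h2b, sw u2b u1m h2b,
    hodd_anticomm u2m u2l h2m h2l, hodd_anticomm u1m u1l h1m h1l,
    hodd_anticomm u2l u1m h2l h1m, hodd_anticomm u2m u1l h2m h1l,
    mul_neg, neg_neg]
  abel
end

section
/- Let R be a commutative ring and let u^{a₁...a_r} ∈ R (for indices in {1,...,n}) be the r×r minors of an r×n matrix U over R, i.e. u^{a₁...a_r} = det of the submatrix of U on columns a₁,...,a_r. Then the Plücker relation u^{a₁...a_r} u^{b₁...b_r} = Σ_{j=1}^{r} u^{b_j a₂...a_r} u^{b₁...b_{j-1} a₁ b_{j+1}...b_r} holds for all index tuples (a₁,...,a_r) and (b₁,...,b_r). -/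
/- STATEMENT 5: classical quadric Plücker relation for the r×r minors
(u a = det of submatrix on columns a) of an r×n matrix (here r = r'+1):
u^{a₁...a_r} u^{b₁...b_r} = Σ_j u^{b_j a₂...a_r} u^{b₁...b_{j-1} a₁ b_{j+1}...b_r}. -/
theorem classical_pluecker_relation_minors
    {R : Type} [CommRing R] {r n : ℕ}
    (U : Matrix (Fin (r + 1)) (Fin n) R)
    (u : (Fin (r + 1) → Fin n) → R)
    (hu : ∀ a : Fin (r + 1) → Fin n, u a = (U.submatrix id a).det)
    (a b : Fin (r + 1) → Fin n) :
    u a * u b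
      = ∑ j : Fin (r + 1),
          u (Function.update a 0 (b j)) * u (Function.update b j (a 0)) := by
  classical
  set A : Matrix (Fin (r + 1)) (Fin (r + 1)) R := U.submatrix id a with hA
  set B : Matrix (Fin (r + 1)) (Fin (r + 1)) R := U.submatrix id b with hB
  have hsub : ∀ (c : Fin (r + 1) → Fin n) (j : Fin (r + 1)) (x : Fin n),
      U.submatrix id (Function.update c j x)
        = (U.submatrix id c).updateCol j (fun i => U i x) := by
    intro c j x
    ext i k
    simp [Matrix.updateCol_apply, Function.update_apply]; split <;> rfl
  have h1 : ∀ j, u (Function.update a 0 (b j))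
      = Matrix.cramer A (fun i => B i j) 0 := by
    intro j
    rw [hu, hsub, Matrix.cramer_apply]
    rfl
  have h2 : ∀ j, u (Function.update b j (a 0))
      = Matrix.cramer B (fun i => A i 0) j := by
    intro j
    rw [hu, hsub, Matrix.cramer_apply]
    rfl
  have hrhs : ∑ j : Fin (r + 1),
      u (Function.update a 0 (b j)) * u (Function.update b j (a 0))
      = ∑ j : Fin (r + 1), ∑ k : Fin (r + 1),
          A.adjugate 0 k * B k j * Matrix.cramer B (fun i => A i 0) j := by
    refine Finset.sum_congr rfl fun j _ => ?_
    rw [h1, h2, Matrix.cramer_eq_adjugate_mulVec, ← Finset.sum_mul]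
    rfl
  rw [hrhs, Finset.sum_comm]
  have : ∀ k : Fin (r + 1),
      ∑ j : Fin (r + 1), A.adjugate 0 k * B k j * Matrix.cramer B (fun i => A i 0) j
      = A.adjugate 0 k * (B.det * A k 0) := by
    intro k
    have hB' : ∑ j : Fin (r + 1), B k j * Matrix.cramer B (fun i => A i 0) j
        = B.det * A k 0 := by
      have := congrFun (Matrix.mulVec_cramer B (fun i => A i 0)) k
      simpa [Matrix.mulVec, dotProduct, smul_eq_mul] using this
    calc ∑ j, A.adjugate 0 k * B k j * Matrix.cramer B (fun i => A i 0) j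
        = A.adjugate 0 k * ∑ j, B k j * Matrix.cramer B (fun i => A i 0) j := by
          rw [Finset.mul_sum]; exact Finset.sum_congr rfl fun j _ => (mul_assoc _ _ _)
      _ = A.adjugate 0 k * (B.det * A k 0) := by rw [hB']
  simp_rw [this]
  have hadj : ∑ k : Fin (r + 1), A.adjugate 0 k * A k 0 = A.det := by
    have := congrFun (congrFun (Matrix.adjugate_mul A) 0) 0
    simpa [Matrix.mul_apply, Matrix.one_apply, smul_eq_mul] using this
  calc u a * u b = A.det * B.det := by rw [hu, hu]
    _ = (∑ k : Fin (r + 1), A.adjugate 0 k * A k 0) * B.det := by rw [hadj]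
    _ = ∑ k : Fin (r + 1), A.adjugate 0 k * (B.det * A k 0) := by
        rw [Finset.sum_mul]; exact Finset.sum_congr rfl fun k _ => by ring
end

section
/- Let g be an even invertible supermatrix of size (r|s)×(r|s) over a supercommutative superalgebra, with block decomposition g = [[g₀₀, g₀₁],[g₁₀, g₁₁]] where g₀₀ (r×r) and g₁₁ (s×s) have even entries and g₀₁, g₁₀ have odd entries, and g₀₀, g₁₁ are invertible. Define Ber g := det(g₀₀ - g₀₁ g₁₁⁻¹ g₁₀) · det(g₁₁)⁻¹ and Ber* g := det(g₁₁ - g₁₀ g₀₀⁻¹ g₀₁) · det(g₀₀)⁻¹. Then Ber* g = (Ber g)⁻¹. -/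
/-!
Put `P = g₀₀⁻¹ g₀₁` and `Q = g₁₁⁻¹ g₁₀`, so that `g₀₀ - g₀₁ g₁₁⁻¹ g₁₀ = g₀₀ (1 - P Q)` and
`g₁₁ - g₁₀ g₀₀⁻¹ g₀₁ = g₁₁ (1 - Q P)`. Everything in sight has entries in the subring generated
by the centre and the products of two odd elements; this subring is commutative, so there `ncdet`
is the ordinary multiplicative determinant, and the theorem reduces to the super analogue of
Sylvester's identity: `det (1 + P Y) * det (1 + Y P) = 1` when `P` and `Y` have odd entries.

For `1 × 1` matrices this is `(1 + p y) (1 + y p) = 1 + (p y + y p) + p y y p = 1`. In general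
split `P = [P₁ P₂]`, `Y = [Y₁; Y₂]` and put `M = 1 + P₁ Y₁`, `U = M⁻¹ P₂`. Then
`1 + P Y = M (1 + U Y₂)`, and by the push-through identity `M⁻¹ = 1 - P₁ (1 + Y₁ P₁)⁻¹ Y₁` the
Schur complement of `1 + Y₁ P₁` in `1 + Y P` is `1 + Y₂ U`, so the identity for `P` follows from
the identities for `(P₁, Y₁)` and `(U, Y₂)`.
-/

/-- Determinant of a square matrix with (possibly noncommutative) ring entries,
given by the Leibniz formula with ordered (column-index) products. For matrices
whose entries are even (central) elements of a superalgebra this is the usual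
determinant. -/
def ncdet {A : Type} [Ring A] {k : ℕ} (M : Matrix (Fin k) (Fin k) A) : A :=
  ∑ σ : Equiv.Perm (Fin k),
    ((Equiv.Perm.sign σ : ℤˣ) : ℤ) • (List.ofFn fun i => M (σ i) i).prod

open Matrix
open scoped IsMulCommutative Pointwise

section MatrixLemmas

variable {R : Type*} {m n : Type*} [Fintype m] [Fintype n] [DecidableEq m] [DecidableEq n]

theorem Matrix.one_add_mul_mul_one_sub_mul_mul_eq_one [Ring R] {P : Matrix m n R}
    {Y : Matrix n m R} {N : Matrix n n R} (hN : (1 + Y * P) * N = 1) :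
    (1 + P * Y) * (1 - P * N * Y) = 1 := by
  calc (1 + P * Y) * (1 - P * N * Y) = 1 + P * Y - P * ((1 + Y * P) * N) * Y := by
        simp only [Matrix.add_mul, Matrix.mul_add, Matrix.mul_sub, Matrix.one_mul, Matrix.mul_one,
          Matrix.mul_assoc]
    _ = 1 := by rw [hN, Matrix.mul_one, add_sub_cancel_right]

theorem Matrix.map_inv_one_add_eq_one_sub {A : Type*} [CommRing R] [Ring A] (f : R →+* A)
    {X : Matrix m m R} {Z : Matrix n n R} {P : Matrix m n A} {Y : Matrix n m A}
    (hX : X.map f = P * Y) (hZ : Z.map f = Y * P) (hXu : IsUnit (1 + X).det)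
    (hZu : IsUnit (1 + Z).det) : (1 + X)⁻¹.map f = 1 - P * (1 + Z)⁻¹.map f * Y := by
  refine left_inv_eq_right_inv (a := 1 + P * Y) ?_ (one_add_mul_mul_one_sub_mul_mul_eq_one ?_)
  · simpa only [map_mul, map_add, map_one, RingHom.mapMatrix_apply, hX] using
      congrArg f.mapMatrix (nonsing_inv_mul _ hXu)
  · simpa only [map_mul, map_add, map_one, RingHom.mapMatrix_apply, hZ] using
      congrArg f.mapMatrix (mul_nonsing_inv _ hZu)

theorem Matrix.det_one_add_fromBlocks [CommRing R] (A : Matrix m m R) (B : Matrix m n R)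
    (C : Matrix n m R) (D : Matrix n n R) (hA : IsUnit (1 + A).det) :
    det (1 + fromBlocks A B C D) = det (1 + A) * det (1 + (D - C * (1 + A)⁻¹ * B)) := by
  let := invertibleOfIsUnitDet _ hA
  rw [← fromBlocks_one, fromBlocks_add, zero_add, zero_add, det_fromBlocks₁₁,
    invOf_eq_nonsing_inv, add_sub_assoc]

omit [DecidableEq n] in
theorem Matrix.sub_mul_mul_eq_mul_one_sub [Ring R] {a a' : Matrix m m R} (h : a * a' = 1)
    (b : Matrix m n R) (c : Matrix n n R) (d : Matrix n m R) :
    a - b * c * d = a * (1 - a' * b * (c * d)) := by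
  rw [Matrix.mul_sub, Matrix.mul_one, ← Matrix.mul_assoc a, ← Matrix.mul_assoc a, h,
    Matrix.one_mul, Matrix.mul_assoc b]

omit [Fintype m] [DecidableEq m] in
theorem Matrix.mem_center_of_mul_eq_one [Ring R] {M N : Matrix n n R}
    (hM : ∀ i j, M i j ∈ Set.center R) (h₁ : M * N = 1) (h₂ : N * M = 1) (i j : n) :
    N i j ∈ Set.center R := by
  refine Semigroup.mem_center_iff.2 fun a => ?_
  have hMa : Commute (scalar n a) M := scalar_commute_iff.2 <| by
    ext i j; exact Semigroup.mem_center_iff.1 (hM i j) a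
  have hNa := hMa.units_inv_right (u := ⟨M, N, h₁, h₂⟩)
  exact congrFun (congrFun (scalar_commute_iff.1 hNa) i) j

end MatrixLemmas

theorem Subring.exists_matrix_map_eq {R : Type*} [Ring R] (C : Subring R) {m n : Type*}
    {M : Matrix m n R} (hM : ∀ i j, M i j ∈ C) : ∃ X : Matrix m n C, X.map C.subtype = M :=
  ⟨of fun i j => ⟨M i j, hM i j⟩, rfl⟩

theorem ncdet_map {A B : Type} [Ring A] [Ring B] (f : A →+* B) {k : ℕ}
    (M : Matrix (Fin k) (Fin k) A) : ncdet (M.map f) = f (ncdet M) := by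
  simp only [ncdet, map_sum, map_zsmul, map_list_prod, List.map_ofFn]
  rfl

theorem ncdet_eq_det {R : Type} [CommRing R] {k : ℕ} (M : Matrix (Fin k) (Fin k) R) :
    ncdet M = M.det := by
  simp only [ncdet, det_apply, List.prod_ofFn, Units.smul_def]

theorem ncdet_mul_of_mem {A : Type} [Ring A] {C : Subring A} [IsMulCommutative C] {k : ℕ}
    {M N : Matrix (Fin k) (Fin k) A} (hM : ∀ i j, M i j ∈ C) (hN : ∀ i j, N i j ∈ C) :
    ncdet (M * N) = ncdet M * ncdet N := by
  obtain ⟨X, rfl⟩ := C.exists_matrix_map_eq hM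
  obtain ⟨Y, rfl⟩ := C.exists_matrix_map_eq hN
  rw [← Matrix.map_mul, ncdet_map, ncdet_map, ncdet_map, ncdet_eq_det, ncdet_eq_det, ncdet_eq_det,
    det_mul, map_mul]

structure SuperCommPair (A : Type*) [Ring A] where
  even : Subring A
  odd : AddSubgroup A
  isMulCommutative_even : IsMulCommutative even
  mul_mem_odd {c x : A} : c ∈ even → x ∈ odd → c * x ∈ odd
  commute_of_mem_even {c x : A} : c ∈ even → x ∈ odd → Commute c x
  mul_mem_even {x y : A} : x ∈ odd → y ∈ odd → x * y ∈ even
  mul_anticomm {x y : A} : x ∈ odd → y ∈ odd → x * y = -(y * x)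
  mul_self_eq_zero {x : A} : x ∈ odd → x * x = 0

namespace SuperCommPair

attribute [instance] isMulCommutative_even

section OfOdd

variable {A : Type*} [Ring A] {T : Set A}

def evenClosure (T : Set A) : Subring A := Subring.closure (Set.center A ∪ T * T)

theorem commute_mul_of_anticomm (hT : ∀ x ∈ T, ∀ y ∈ T, x * y = -(y * x)) {a b c : A}
    (ha : a ∈ T) (hb : b ∈ T) (hc : c ∈ T) : Commute (a * b) c := by
  rw [Commute, SemiconjBy, mul_assoc, hT b hb c hc, mul_neg, ← mul_assoc, hT a ha c hc, neg_mul,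
    neg_neg, mul_assoc]

theorem evenClosure_le_centralizer (hT : ∀ x ∈ T, ∀ y ∈ T, x * y = -(y * x)) :
    evenClosure T ≤ Subring.centralizer T := by
  rw [evenClosure, Subring.closure_le]
  rintro z (hz | ⟨a, ha, b, hb, rfl⟩) c hc
  · exact Subring.mem_center_iff.1 hz c
  · exact (commute_mul_of_anticomm hT ha hb hc).symm

theorem isMulCommutative_evenClosure (hT : ∀ x ∈ T, ∀ y ∈ T, x * y = -(y * x)) :
    IsMulCommutative (evenClosure T) := by
  refine Subring.isMulCommutative_closure ?_
  rintro x (hx | ⟨a, ha, b, hb, rfl⟩) y hy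
  · exact (Subring.mem_center_iff.1 hx y).symm
  rcases hy with hy | ⟨c, hc, d, hd, rfl⟩
  · exact Subring.mem_center_iff.1 hy _
  · exact ((commute_mul_of_anticomm hT ha hb hc).mul_right
      (commute_mul_of_anticomm hT ha hb hd)).eq

theorem commute_of_mem_span (hT : ∀ x ∈ T, ∀ y ∈ T, x * y = -(y * x)) {c x : A}
    (hc : c ∈ evenClosure T) (hx : x ∈ Submodule.span (evenClosure T) T) : Commute c x := by
  have := isMulCommutative_evenClosure hT
  induction hx using Submodule.span_induction with
  | mem a ha => exact (evenClosure_le_centralizer hT hc a ha).symm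
  | zero => exact Commute.zero_right c
  | add _ _ _ _ h₁ h₂ => exact h₁.add_right h₂
  | smul d _ _ h => exact Commute.mul_right (setLike_mul_comm hc d.2) h

theorem mul_mem_and_anticomm_of_mem_span (hT : ∀ x ∈ T, ∀ y ∈ T, x * y = -(y * x)) {x y : A}
    (hx : x ∈ Submodule.span (evenClosure T) T) (hy : y ∈ Submodule.span (evenClosure T) T) :
    x * y ∈ evenClosure T ∧ x * y = -(y * x) := by
  induction hx, hy using Submodule.span_induction₂ with
  | mem_mem a b ha hb =>
    exact ⟨Subring.subset_closure (.inr ⟨a, ha, b, hb, rfl⟩), hT a ha b hb⟩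
  | zero_left => simp
  | zero_right => simp
  | add_left x y z _ _ _ h₁ h₂ =>
    exact ⟨by rw [add_mul]; exact add_mem h₁.1 h₂.1, by rw [add_mul, mul_add, h₁.2, h₂.2, neg_add]⟩
  | add_right x y z _ _ _ h₁ h₂ =>
    exact ⟨by rw [mul_add]; exact add_mem h₁.1 h₂.1, by rw [add_mul, mul_add, h₁.2, h₂.2, neg_add]⟩
  | smul_left r x y _ hy h =>
    have hr : Commute (r : A) y := commute_of_mem_span hT r.2 hy
    refine ⟨by rw [Subring.smul_def, smul_eq_mul, mul_assoc]; exact mul_mem r.2 h.1, ?_⟩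
    rw [Subring.smul_def, smul_eq_mul, mul_assoc, h.2, mul_neg, ← mul_assoc, hr.eq, mul_assoc]
  | smul_right r x y hx _ h =>
    have hr : Commute (r : A) x := commute_of_mem_span hT r.2 hx
    rw [Subring.smul_def, smul_eq_mul, ← mul_assoc, ← hr.eq, mul_assoc]
    exact ⟨mul_mem r.2 h.1, by rw [h.2, mul_neg, ← mul_assoc]⟩

theorem mul_self_eq_zero_of_mem_span (hT : ∀ x ∈ T, ∀ y ∈ T, x * y = -(y * x))
    (hT₂ : ∀ x ∈ T, x * x = 0) {x : A} (hx : x ∈ Submodule.span (evenClosure T) T) :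
    x * x = 0 := by
  induction hx using Submodule.span_induction with
  | mem a ha => exact hT₂ a ha
  | zero => exact mul_zero 0
  | add x y hx hy h₁ h₂ =>
    rw [add_mul, mul_add, mul_add, h₁, h₂, (mul_mem_and_anticomm_of_mem_span hT hx hy).2]
    abel
  | smul r x hx h =>
    rw [Subring.smul_def, smul_eq_mul, mul_assoc, ← mul_assoc x,
      ← (commute_of_mem_span hT r.2 hx).eq, mul_assoc, h, mul_zero, mul_zero]

def ofOdd (T : Set A) (hT : ∀ x ∈ T, ∀ y ∈ T, x * y = -(y * x)) (hT₂ : ∀ x ∈ T, x * x = 0) :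
    SuperCommPair A where
  even := evenClosure T
  odd := (Submodule.span (evenClosure T) T).toAddSubgroup
  isMulCommutative_even := isMulCommutative_evenClosure hT
  mul_mem_odd hc hx := Submodule.smul_mem _ ⟨_, hc⟩ hx
  commute_of_mem_even := commute_of_mem_span hT
  mul_mem_even hx hy := (mul_mem_and_anticomm_of_mem_span hT hx hy).1
  mul_anticomm hx hy := (mul_mem_and_anticomm_of_mem_span hT hx hy).2
  mul_self_eq_zero := mul_self_eq_zero_of_mem_span hT hT₂

theorem center_subset_ofOdd_even (hT : ∀ x ∈ T, ∀ y ∈ T, x * y = -(y * x))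
    (hT₂ : ∀ x ∈ T, x * x = 0) : Set.center A ⊆ (ofOdd T hT hT₂).even :=
  fun _ hx => Subring.subset_closure (.inl hx)

theorem subset_ofOdd_odd (hT : ∀ x ∈ T, ∀ y ∈ T, x * y = -(y * x))
    (hT₂ : ∀ x ∈ T, x * x = 0) : T ⊆ (ofOdd T hT hT₂).odd :=
  fun _ hx => Submodule.subset_span hx

end OfOdd

section OddSylvester

variable {A : Type*} [Ring A] (S : SuperCommPair A)

def OddSylvester (m n : Type*) [Fintype m] [Fintype n] [DecidableEq m] [DecidableEq n] : Prop :=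
  ∀ (P : Matrix m n A) (Y : Matrix n m A), (∀ i j, P i j ∈ S.odd) → (∀ i j, Y i j ∈ S.odd) →
    ∀ (X : Matrix m m S.even) (Z : Matrix n n S.even),
      X.map S.even.subtype = P * Y → Z.map S.even.subtype = Y * P → det (1 + X) * det (1 + Z) = 1

variable {m n : Type*}

theorem mul_mem_even_of_odd [Fintype n] {P : Matrix m n A} {Y : Matrix n m A}
    (hP : ∀ i j, P i j ∈ S.odd) (hY : ∀ i j, Y i j ∈ S.odd) (i j : m) : (P * Y) i j ∈ S.even :=
  sum_mem fun k _ => S.mul_mem_even (hP i k) (hY k j)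

theorem one_sub_mul_mem_even [Fintype n] [DecidableEq m] {P : Matrix m n A} {Q : Matrix n m A}
    (hP : ∀ i j, P i j ∈ S.odd) (hQ : ∀ i j, Q i j ∈ S.odd) (i j : m) :
    ((1 : Matrix m m A) - P * Q) i j ∈ S.even := by
  rw [Matrix.sub_apply, one_apply]
  exact sub_mem (by split_ifs <;> simp) (S.mul_mem_even_of_odd hP hQ i j)

theorem mul_mem_odd_of_even [Fintype m] {X : Matrix m m A} {P : Matrix m n A}
    (hX : ∀ i j, X i j ∈ S.even) (hP : ∀ i j, P i j ∈ S.odd) (i : m) (j : n) :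
    (X * P) i j ∈ S.odd :=
  sum_mem fun k _ => S.mul_mem_odd (hX i k) (hP k j)

variable [Fintype m] [Fintype n] [DecidableEq m] [DecidableEq n]

variable {S}

theorem OddSylvester.symm (h : S.OddSylvester m n) : S.OddSylvester n m :=
  fun P Y hP hY X Z hX hZ => by rw [mul_comm]; exact h Y P hY hP Z X hZ hX

theorem OddSylvester.of_equiv {n' : Type*} [Fintype n'] [DecidableEq n'] (e : n ≃ n')
    (h : S.OddSylvester m n) : S.OddSylvester m n' := by
  intro P Y hP hY X Z hX hZ
  have hdet := h (P.submatrix id e) (Y.submatrix e id) (fun i j => hP _ _) (fun i j => hY _ _)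
    X (Z.submatrix e e) (by rw [hX, submatrix_mul_equiv P Y id e id, submatrix_id_id])
    (by rw [← submatrix_map, hZ, ← submatrix_mul_equiv Y P e (Equiv.refl m) e]; rfl)
  have hZe : 1 + Z.submatrix e e = (1 + Z).submatrix e e := by
    ext i j; simp [Matrix.one_apply]
  rwa [hZe, det_submatrix_equiv_self] at hdet

variable (S) in
theorem oddSylvester_of_isEmpty [IsEmpty n] : S.OddSylvester m n := by
  intro P Y _ _ X Z hX _
  have hX0 : X = 0 := map_injective S.even.subtype_injective <| by
    simp only [hX, Matrix.map_zero _ (map_zero _)]; ext i j; simp [Matrix.mul_apply]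
  rw [hX0, add_zero, det_one, one_mul, det_isEmpty]

variable (S) in
theorem oddSylvester_of_unique [Unique m] [Unique n] : S.OddSylvester m n := by
  intro P Y hP hY X Z hX hZ
  set p := P default default
  set y := Y default default
  have hx : (X default default : A) = p * y := by
    simpa [Matrix.mul_apply] using congrFun (congrFun hX default) default
  have hz : (Z default default : A) = y * p := by
    simpa [Matrix.mul_apply] using congrFun (congrFun hZ default) default
  rw [det_unique, det_unique]
  apply Subtype.val_injective
  simp only [Matrix.add_apply, one_apply_eq, Subring.coe_mul, Subring.coe_add, Subring.coe_one,
    hx, hz]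
  calc (1 + p * y) * (1 + y * p) = 1 + (p * y + y * p) + p * (y * y) * p := by noncomm_ring
    _ = 1 := by
      rw [S.mul_anticomm (hP _ _) (hY _ _), neg_add_cancel, S.mul_self_eq_zero (hY _ _)]
      simp

theorem OddSylvester.sum {n₁ n₂ : Type*} [Fintype n₁] [Fintype n₂] [DecidableEq n₁]
    [DecidableEq n₂] (h₁ : S.OddSylvester m n₁) (h₂ : S.OddSylvester m n₂) :
    S.OddSylvester m (n₁ ⊕ n₂) := by
  intro P Y hP hY X Z hX hZ
  obtain ⟨P₁, P₂, rfl⟩ : ∃ P₁ P₂, P = fromCols P₁ P₂ := ⟨_, _, (fromCols_toCols P).symm⟩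
  obtain ⟨Y₁, Y₂, rfl⟩ : ∃ Y₁ Y₂, Y = fromRows Y₁ Y₂ := ⟨_, _, (fromRows_toRows Y).symm⟩
  obtain ⟨Z₁, Z₁₂, Z₂₁, Z₂₂, rfl⟩ : ∃ Z₁ Z₁₂ Z₂₁ Z₂₂, Z = fromBlocks Z₁ Z₁₂ Z₂₁ Z₂₂ :=
    ⟨_, _, _, _, (fromBlocks_toBlocks Z).symm⟩
  rw [fromCols_mul_fromRows] at hX
  rw [fromBlocks_map, fromRows_mul_fromCols, fromBlocks_inj] at hZ
  obtain ⟨hZ₁, hZ₁₂, hZ₂₁, hZ₂₂⟩ := hZ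
  have hP₁ : ∀ i j, P₁ i j ∈ S.odd := fun i j => hP i (.inl j)
  have hY₁ : ∀ i j, Y₁ i j ∈ S.odd := fun i j => hY (.inl i) j
  obtain ⟨X₁, hX₁⟩ := S.even.exists_matrix_map_eq (S.mul_mem_even_of_odd hP₁ hY₁)
  have hdet₁ := h₁ P₁ Y₁ hP₁ hY₁ X₁ Z₁ hX₁ hZ₁
  have hM : IsUnit (1 + X₁).det := IsUnit.of_mul_eq_one _ hdet₁
  have hN : IsUnit (1 + Z₁).det := IsUnit.of_mul_eq_one_right _ hdet₁
  set U := (1 + X₁)⁻¹.map S.even.subtype * P₂ with hU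
  set X₂ := (1 + X₁)⁻¹ * (X - X₁)
  set Z₂ := Z₂₂ - Z₂₁ * (1 + Z₁)⁻¹ * Z₁₂
  have hX₂ : X₂.map S.even.subtype = U * Y₂ := by
    rw [Matrix.map_mul, Matrix.map_sub _ (map_sub _), hX, hX₁, add_sub_cancel_left,
      Matrix.mul_assoc]
  have hZ₂ : Z₂.map S.even.subtype = Y₂ * U := by
    rw [Matrix.map_sub _ (map_sub _), Matrix.map_mul, Matrix.map_mul, hZ₂₂, hZ₂₁, hZ₁₂, hU,
      map_inv_one_add_eq_one_sub _ hX₁ hZ₁ hM hN]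
    simp only [Matrix.mul_sub, Matrix.sub_mul, Matrix.one_mul, Matrix.mul_assoc]
  have hU_odd := S.mul_mem_odd_of_even (fun i j => ((1 + X₁)⁻¹ i j).2) fun i j => hP i (.inr j)
  have hdet₂ := h₂ U Y₂ hU_odd (fun i j => hY (.inr i) j) X₂ Z₂ hX₂ hZ₂
  have hXdet : det (1 + X) = det (1 + X₁) * det (1 + X₂) := by
    rw [← det_mul, Matrix.mul_add, Matrix.mul_one, ← Matrix.mul_assoc, mul_nonsing_inv _ hM,
      Matrix.one_mul, add_add_sub_cancel]
  rw [hXdet, det_one_add_fromBlocks _ _ _ _ hN]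
  linear_combination (det (1 + X₂) * det (1 + Z₂)) * hdet₁ + hdet₂

theorem OddSylvester.fin_of_fin_one (h : S.OddSylvester m (Fin 1)) :
    ∀ l, S.OddSylvester m (Fin l)
  | 0 => oddSylvester_of_isEmpty S
  | l + 1 => ((h.fin_of_fin_one l).sum h).of_equiv finSumFinEquiv

variable (S m n) in
theorem oddSylvester : S.OddSylvester m n :=
  have hfin : S.OddSylvester (Fin (Fintype.card n)) (Fin (Fintype.card m)) :=
    ((S.oddSylvester_of_unique.fin_of_fin_one _).symm).fin_of_fin_one _
  ((hfin.of_equiv (Fintype.equivFin m).symm).symm).of_equiv (Fintype.equivFin n).symm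

end OddSylvester

section Ncdet

variable {A : Type} [Ring A] (S : SuperCommPair A)

theorem ncdet_one_sub_mul_mul_ncdet_one_sub_mul {k l : ℕ} {P : Matrix (Fin k) (Fin l) A}
    {Q : Matrix (Fin l) (Fin k) A} (hP : ∀ i j, P i j ∈ S.odd) (hQ : ∀ i j, Q i j ∈ S.odd) :
    ncdet (1 - P * Q) * ncdet (1 - Q * P) = 1 := by
  obtain ⟨X, hX⟩ := S.even.exists_matrix_map_eq (S.mul_mem_even_of_odd hP hQ)
  obtain ⟨Z, hZ⟩ := S.even.exists_matrix_map_eq (S.mul_mem_even_of_odd hQ hP)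
  have hXZ := S.oddSylvester _ _ P (-Q) hP (fun i j => neg_mem (hQ i j)) (-X) (-Z)
    (by rw [Matrix.map_neg _ (map_neg _), hX, Matrix.mul_neg])
    (by rw [Matrix.map_neg _ (map_neg _), hZ, Matrix.neg_mul])
  have e₁ : 1 - P * Q = (1 + -X).map S.even.subtype := by
    rw [← RingHom.mapMatrix_apply, map_add, map_one, map_neg, RingHom.mapMatrix_apply, hX,
      sub_eq_add_neg]
  have e₂ : 1 - Q * P = (1 + -Z).map S.even.subtype := by
    rw [← RingHom.mapMatrix_apply, map_add, map_one, map_neg, RingHom.mapMatrix_apply, hZ,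
      sub_eq_add_neg]
  rw [e₁, e₂, ncdet_map, ncdet_map, ncdet_eq_det, ncdet_eq_det, ← map_mul, hXZ, map_one]

theorem ncdet_sub_mul_mul_ncdet_sub_mul_eq_one {r s : ℕ} {g00 g00i : Matrix (Fin r) (Fin r) A}
    {g11 g11i : Matrix (Fin s) (Fin s) A} {g01 : Matrix (Fin r) (Fin s) A}
    {g10 : Matrix (Fin s) (Fin r) A} {d00i d11i : A} (h00 : ∀ i j, g00 i j ∈ S.even)
    (h11 : ∀ i j, g11 i j ∈ S.even) (h00i : ∀ i j, g00i i j ∈ S.even)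
    (h11i : ∀ i j, g11i i j ∈ S.even) (h01 : ∀ i j, g01 i j ∈ S.odd)
    (h10 : ∀ i j, g10 i j ∈ S.odd) (hg00i : g00 * g00i = 1) (hg11i : g11 * g11i = 1)
    (hd00 : ncdet g00 * d00i = 1) (hd11 : d11i * ncdet g11 = 1) :
    ncdet (g00 - g01 * g11i * g10) * d11i * (ncdet (g11 - g10 * g00i * g01) * d00i) = 1 := by
  have hP := S.mul_mem_odd_of_even h00i h01
  have hQ := S.mul_mem_odd_of_even h11i h10
  rw [sub_mul_mul_eq_mul_one_sub hg00i, sub_mul_mul_eq_mul_one_sub hg11i,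
    ncdet_mul_of_mem h00 (S.one_sub_mul_mem_even hP hQ),
    ncdet_mul_of_mem h11 (S.one_sub_mul_mem_even hQ hP)]
  calc _ = ncdet g00 * (ncdet (1 - g00i * g01 * (g11i * g10)) * (d11i * ncdet g11)
        * ncdet (1 - g11i * g10 * (g00i * g01))) * d00i := by
        simp only [mul_assoc]
    _ = 1 := by rw [hd11, mul_one, S.ncdet_one_sub_mul_mul_ncdet_one_sub_mul hP hQ, mul_one, hd00]

end Ncdet

end SuperCommPair

theorem berStar_eq_inv_ber
    {A : Type} [Ring A]
    (IsEven IsOdd : A → Prop)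
    (heven_central : ∀ x y : A, IsEven x → x * y = y * x)
    (hodd_anticomm : ∀ x y : A, IsOdd x → IsOdd y → x * y = -(y * x))
    (hodd_sq : ∀ x : A, IsOdd x → x * x = 0)
    {r s : ℕ}
    (g00 : Matrix (Fin r) (Fin r) A) (g01 : Matrix (Fin r) (Fin s) A)
    (g10 : Matrix (Fin s) (Fin r) A) (g11 : Matrix (Fin s) (Fin s) A)
    (h00e : ∀ i j, IsEven (g00 i j)) (h11e : ∀ i j, IsEven (g11 i j))
    (h01o : ∀ i j, IsOdd (g01 i j)) (h10o : ∀ i j, IsOdd (g10 i j))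
    (g00i : Matrix (Fin r) (Fin r) A)
    (hg00i : g00 * g00i = 1 ∧ g00i * g00 = 1)
    (g11i : Matrix (Fin s) (Fin s) A)
    (hg11i : g11 * g11i = 1 ∧ g11i * g11 = 1)
    (d00i d11i : A)
    (hd00 : ncdet g00 * d00i = 1 ∧ d00i * ncdet g00 = 1)
    (hd11 : ncdet g11 * d11i = 1 ∧ d11i * ncdet g11 = 1) :
    (ncdet (g00 - g01 * g11i * g10) * d11i)
        * (ncdet (g11 - g10 * g00i * g01) * d00i) = 1 ∧
    (ncdet (g11 - g10 * g00i * g01) * d00i)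
        * (ncdet (g00 - g01 * g11i * g10) * d11i) = 1 := by
  have hT : ∀ x ∈ {x | IsOdd x}, ∀ y ∈ {x | IsOdd x}, x * y = -(y * x) :=
    fun x hx y hy => hodd_anticomm x y hx hy
  let S := SuperCommPair.ofOdd {x | IsOdd x} hT hodd_sq
  have hcenter {x : A} (hx : IsEven x) : x ∈ Set.center A :=
    Semigroup.mem_center_iff.2 fun y => (heven_central x y hx).symm
  have heven {x : A} (hx : x ∈ Set.center A) : x ∈ S.even :=
    SuperCommPair.center_subset_ofOdd_even hT hodd_sq hx
  have hodd {x : A} (hx : IsOdd x) : x ∈ S.odd := SuperCommPair.subset_ofOdd_odd hT hodd_sq hx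
  have h00 i j : g00 i j ∈ S.even := heven (hcenter (h00e i j))
  have h11 i j : g11 i j ∈ S.even := heven (hcenter (h11e i j))
  have h00i i j : g00i i j ∈ S.even :=
    heven (mem_center_of_mul_eq_one (fun i j => hcenter (h00e i j)) hg00i.1 hg00i.2 i j)
  have h11i i j : g11i i j ∈ S.even :=
    heven (mem_center_of_mul_eq_one (fun i j => hcenter (h11e i j)) hg11i.1 hg11i.2 i j)
  have h01 i j : g01 i j ∈ S.odd := hodd (h01o i j)
  have h10 i j : g10 i j ∈ S.odd := hodd (h10o i j)
  exact ⟨S.ncdet_sub_mul_mul_ncdet_sub_mul_eq_one h00 h11 h00i h11i h01 h10 hg00i.1 hg11i.1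
      hd00.1 hd11.2,
    S.ncdet_sub_mul_mul_ncdet_sub_mul_eq_one h11 h00 h11i h00i h10 h01 hg11i.1 hg00i.1
      hd11.1 hd00.2⟩
end

section
/- Let V be a module over a commutative ring with a ℤ/2-grading, and let T ∈ Λᵏ(V) be an even multivector written as T = T^{a₁...a_k} e_{a₁} ⊗ ... ⊗ e_{a_k} with super-antisymmetric coefficients, where e_a is a homogeneous basis. If T = u₁ ∧ ... ∧ u_k for even vectors u₁,...,u_k, then w ∧ T = 0 for every w in the span L_T of the vectors T(p¹,...,p^{k-1},−) obtained by contracting T with k−1 covectors. -/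
/-! Each even `u i` squares to zero and anticommutes with the other even factors, so it can be
moved next to its own occurrence in `u₁ ∧ ⋯ ∧ u_k`, whence `u i ∧ T = 0`. The vectors `w` with
`w ∧ T = 0` form the kernel of the linear map `w ↦ w ∧ T`, so they contain the span of the `u i`. -/

theorem List.mul_prod_eq_zero_of_mem {E : Type*} [Ring E] {a : E} {l : List E}
    (hsq : a * a = 0) (hanti : ∀ b ∈ l, a * b = -(b * a)) (ha : a ∈ l) :
    a * l.prod = 0 := by
  induction l with
  | nil => simp at ha
  | cons b l ih =>
    rw [List.prod_cons, ← mul_assoc]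
    rcases List.mem_cons.mp ha with rfl | ha
    · rw [hsq, zero_mul]
    · rw [hanti b List.mem_cons_self, neg_mul, mul_assoc,
        ih (fun c hc => hanti c (List.mem_cons_of_mem _ hc)) ha, mul_zero, neg_zero]

theorem simple_multivector_wedge_associated_space_zero
    {R : Type} [CommRing R] {V : Type} [AddCommGroup V] [Module R V]
    {E : Type} [Ring E] [Algebra R E]
    (V₀ : Submodule R V)  -- the even part of V
    (ι : V →ₗ[R] E)
    (hsq : ∀ v ∈ V₀, ι v * ι v = 0)
    (hanti : ∀ v ∈ V₀, ∀ w ∈ V₀, ι v * ι w = -(ι w * ι v))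
    {k : ℕ} (u : Fin k → V) (hu : ∀ i, u i ∈ V₀)
    (T : E) (hT : T = (List.ofFn fun i => ι (u i)).prod)
    (w : V) (hw : w ∈ Submodule.span R (Set.range u)) :
    ι w * T = 0 := by
  have hfactor : ∀ i, ι (u i) * T = 0 := fun i => by
    rw [hT]
    refine List.mul_prod_eq_zero_of_mem (hsq _ (hu i)) ?_ (List.mem_ofFn.mpr ⟨i, rfl⟩)
    intro b hb
    obtain ⟨j, rfl⟩ := List.mem_ofFn.mp hb
    exact hanti _ (hu i) _ (hu j)
  have hspan : Submodule.span R (Set.range u) ≤ LinearMap.ker (LinearMap.mulRight R T ∘ₗ ι) :=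
    Submodule.span_le.mpr (Set.range_subset_iff.mpr hfactor)
  exact hspan hw
end

section
/- Let A be a supercommutative superalgebra, x ∈ A₀ invertible, y ∈ A₀ invertible, ξ, η ∈ A₁, and set u^{1|1̂} := (x − ξy⁻¹η)y⁻¹ (the Berezinian of [[x,ξ],[η,y]]), u^{2|1̂} := y⁻¹, u^{1|2̂} := x, u^{2|2̂} := 1, u^{1̂|2̂} := ξ, u^{2̂|1̂} := −ξ y⁻², u^{*2|1} := η, u^{*1|2} := −η x⁻², u^{*1|1̂} := (y − ηx⁻¹ξ)x⁻¹, u^{*2|2̂} := 1, u^{*1|2̂} := x⁻¹. Then the alternative-form super Plücker relation (without denominators) u^{a|μ̂}u^{b|ν̂} = u^{a|ν̂}u^{b|μ̂} + u^{μ̂|ν̂}u^{*a|b}(u^{a|μ̂})² holds for (a,b,μ̂,ν̂) = (1,2,1̂,2̂), i.e. (x − ξy⁻¹η)y⁻¹ · 1 = x·y⁻¹ + ξ·(−ηx⁻²)·((x − ξy⁻¹η)y⁻¹)² holds in A. -/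
/- STATEMENT 17: alternative-form super Plücker relation
u^{a|μ̂} u^{b|ν̂} = u^{a|ν̂} u^{b|μ̂} + u^{μ̂|ν̂} u^{*a|b} (u^{a|μ̂})²
verified for (a,b,μ̂,ν̂) = (1,2,1̂,2̂) on the gauge-fixed matrix
U = [[x, 1 | ξ, 0],[η, 0 | y, 1]], where
u^{1|1̂} = (x − ξ y⁻¹ η) y⁻¹, u^{2|2̂} = 1, u^{1|2̂} = x, u^{2|1̂} = y⁻¹,
u^{1̂|2̂} = ξ, u^{*1|2} = −η x⁻². -/
theorem alternative_super_pluecker_relation_11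
    {A : Type} [Ring A]
    (IsEven IsOdd : A → Prop)
    (heven_central : ∀ x y : A, IsEven x → x * y = y * x)
    (hodd_anticomm : ∀ x y : A, IsOdd x → IsOdd y → x * y = -(y * x))
    (hodd_sq : ∀ x : A, IsOdd x → x * x = 0)
    (x y xi yi ξ η : A)
    (hxe : IsEven x) (hye : IsEven y) (hxie : IsEven xi) (hyie : IsEven yi)
    (hξ : IsOdd ξ) (hη : IsOdd η)
    (hx1 : x * xi = 1) (hx2 : xi * x = 1) (hy1 : y * yi = 1) (hy2 : yi * y = 1) :
    ((x - ξ * yi * η) * yi) * 1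
      = x * yi
        + ξ * (-(η * (xi * xi)))
            * (((x - ξ * yi * η) * yi) * ((x - ξ * yi * η) * yi)) := by
  have s1 : ∀ a : A, xi * x = x * xi := fun _ => heven_central xi x hxie
  have c1 : xi * x = x * xi := heven_central xi x hxie
  have c1' : ∀ a : A, xi * (x * a) = x * (xi * a) := by
    intro a; rw [← mul_assoc, c1, mul_assoc]
  have c2 : yi * x = x * yi := heven_central yi x hyie
  have c2' : ∀ a : A, yi * (x * a) = x * (yi * a) := by
    intro a; rw [← mul_assoc, c2, mul_assoc]
  have c3 : yi * xi = xi * yi := heven_central yi xi hyie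
  have c3' : ∀ a : A, yi * (xi * a) = xi * (yi * a) := by
    intro a; rw [← mul_assoc, c3, mul_assoc]
  have c4 : ξ * x = x * ξ := (heven_central x ξ hxe).symm
  have c4' : ∀ a : A, ξ * (x * a) = x * (ξ * a) := by
    intro a; rw [← mul_assoc, c4, mul_assoc]
  have c5 : ξ * xi = xi * ξ := (heven_central xi ξ hxie).symm
  have c5' : ∀ a : A, ξ * (xi * a) = xi * (ξ * a) := by
    intro a; rw [← mul_assoc, c5, mul_assoc]
  have c6 : ξ * yi = yi * ξ := (heven_central yi ξ hyie).symm
  have c6' : ∀ a : A, ξ * (yi * a) = yi * (ξ * a) := by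
    intro a; rw [← mul_assoc, c6, mul_assoc]
  have c7 : η * x = x * η := (heven_central x η hxe).symm
  have c7' : ∀ a : A, η * (x * a) = x * (η * a) := by
    intro a; rw [← mul_assoc, c7, mul_assoc]
  have c8 : η * xi = xi * η := (heven_central xi η hxie).symm
  have c8' : ∀ a : A, η * (xi * a) = xi * (η * a) := by
    intro a; rw [← mul_assoc, c8, mul_assoc]
  have c9 : η * yi = yi * η := (heven_central yi η hyie).symm
  have c9' : ∀ a : A, η * (yi * a) = yi * (η * a) := by
    intro a; rw [← mul_assoc, c9, mul_assoc]
  have c10 : η * ξ = -(ξ * η) := hodd_anticomm η ξ hη hξ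
  have c10' : ∀ a : A, η * (ξ * a) = -(ξ * (η * a)) := by
    intro a; rw [← mul_assoc, c10, neg_mul, mul_assoc]
  have c11 : ξ * ξ = 0 := hodd_sq ξ hξ
  have c11' : ∀ a : A, ξ * (ξ * a) = 0 := by
    intro a; rw [← mul_assoc, c11, zero_mul]
  have c12 : η * η = 0 := hodd_sq η hη
  have c12' : ∀ a : A, η * (η * a) = 0 := by
    intro a; rw [← mul_assoc, c12, zero_mul]
  have hx1' : ∀ a : A, x * (xi * a) = a := by
    intro a; rw [← mul_assoc, hx1, one_mul]
  have hy1' : ∀ a : A, y * (yi * a) = a := by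
    intro a; rw [← mul_assoc, hy1, one_mul]
  simp only [mul_one, sub_mul, mul_sub, mul_add, add_mul, mul_neg, neg_mul, neg_neg,
    mul_assoc, neg_sub, sub_neg_eq_add]
  simp only [c1, c1', c2, c2', c3, c3', c4, c4', c5, c5', c6, c6', c7, c7', c8, c8',
    c9, c9', c10, c10', c11, c11', c12, c12', hx1, hx1', hy1, hy1',
    mul_zero, zero_mul, mul_one, mul_neg, neg_neg, mul_sub, sub_mul, mul_add, add_mul, neg_mul]
  abel
end

section
/- Let R be a commutative ring and U an r×n matrix over R whose minors are denoted u^{a₁...a_r} := det U^{a₁...a_r}. Fix (a₁,...,a_r) with u^{a₁...a_r} invertible. Then for all (b₁,...,b_r): det of the r×r matrix whose (i,j) entry is u^{a₁...a_{i-1} b_j a_{i+1}...a_r} equals (u^{a₁...a_r})^{r−1} · u^{b₁...b_r}. -/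
/-! Replacing the `i`-th column of `A = U_a` by the column `U_{b_j}` and taking the determinant
is Cramer's rule, so the matrix of substituted minors is `adj(A) * U_b`; taking determinants and
using `det (adj A) = (det A)^(r-1)` gives the identity. -/

namespace Matrix

variable {α R : Type*} {l m n o : Type*}

theorem submatrix_update_right [DecidableEq o] (U : Matrix l n α) (f : m → l) (a : o → n)
    (i : o) (c : n) :
    U.submatrix f (Function.update a i c) = (U.submatrix f a).updateCol i fun k => U (f k) c := by
  ext k j
  by_cases hj : j = i <;> simp [hj]

variable [CommRing R] [Fintype m] [DecidableEq m]

theorem of_det_submatrix_update_eq_adjugate_mul (U : Matrix m n R) (a b : m → n) :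
    (of fun i j => (U.submatrix id (Function.update a i (b j))).det)
      = (U.submatrix id a).adjugate * U.submatrix id b := by
  ext i j
  rw [of_apply, submatrix_update_right, ← cramer_apply, cramer_eq_adjugate_mulVec]
  rfl

theorem det_of_det_submatrix_update (U : Matrix m n R) (a b : m → n) :
    (of fun i j => (U.submatrix id (Function.update a i (b j))).det).det
      = (U.submatrix id a).det ^ (Fintype.card m - 1) * (U.submatrix id b).det := by
  rw [of_det_submatrix_update_eq_adjugate_mul, det_mul, det_adjugate]

end Matrix

theorem sylvester_form_of_pluecker_relations_general
    {R : Type} [CommRing R] {r n : ℕ}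
    (U : Matrix (Fin (r + 1)) (Fin n) R)
    (u : (Fin (r + 1) → Fin n) → R)
    (hu : ∀ a : Fin (r + 1) → Fin n, u a = (U.submatrix id a).det)
    (a : Fin (r + 1) → Fin n)
    (b : Fin (r + 1) → Fin n) :
    (Matrix.of fun i j : Fin (r + 1) => u (Function.update a i (b j))).det
      = u a ^ r * u b := by
  simp only [hu]
  rw [Matrix.det_of_det_submatrix_update, Fintype.card_fin, Nat.add_sub_cancel]

theorem sylvester_form_of_pluecker_relations
    {R : Type} [CommRing R] {r n : ℕ}
    (U : Matrix (Fin (r + 1)) (Fin n) R)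
    (u : (Fin (r + 1) → Fin n) → R)
    (hu : ∀ a : Fin (r + 1) → Fin n, u a = (U.submatrix id a).det)
    (a : Fin (r + 1) → Fin n) (ha : IsUnit (u a))
    (b : Fin (r + 1) → Fin n) :
    (Matrix.of fun i j : Fin (r + 1) => u (Function.update a i (b j))).det
      = u a ^ r * u b :=
  sylvester_form_of_pluecker_relations_general U u hu a b
end
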